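/- arXiv:2402.13692 — 3 statements merged into one kernel-verified Lean document; each statement's English description precedes it below -/
import Mathlib

section
/- Let V > 0, c > 0, f_l > 0, f_e > 0, R > 0 and define T(v) = max{(V − v)c/f_l, v/R + v c/f_e} for real v ∈ [0, V]. Then v* = V c R f_e / (f_e f_l + c R (f_e + f_l)) lies in (0, V), satisfies (V − v*)c/f_l = v*/R + v* c/f_e, and is the unique minimizer of T on [0, V]; indeed (V − v)c/f_l is strictly decreasing in v and v/R + v c/f_e is strictly increasing in v. -/
theorem stmt_1 (V c fl fe R : ℝ) (hV : 0 < V) (hc : 0 < c) (hfl : 0 < fl)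
    (hfe : 0 < fe) (hR : 0 < R) :
    let T : ℝ → ℝ := fun v => max ((V - v) * c / fl) (v / R + v * c / fe)
    let vstar : ℝ := V * c * R * fe / (fe * fl + c * R * (fe + fl))
    vstar ∈ Set.Ioo 0 V ∧
    (V - vstar) * c / fl = vstar / R + vstar * c / fe ∧
    (∀ v ∈ Set.Icc 0 V, T vstar ≤ T v) ∧
    (∀ v ∈ Set.Icc 0 V, T v = T vstar → v = vstar) ∧
    StrictAnti (fun v : ℝ => (V - v) * c / fl) ∧
    StrictMono (fun v : ℝ => v / R + v * c / fe) := by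
  intro T vstar
  have hD : 0 < fe * fl + c * R * (fe + fl) := by positivity
  have hpos : 0 < vstar := by
    have : 0 < V * c * R * fe := by positivity
    exact div_pos this hD
  have hlt : vstar < V := by
    show V * c * R * fe / (fe * fl + c * R * (fe + fl)) < V
    rw [div_lt_iff₀ hD]
    nlinarith [mul_pos hc (mul_pos hR hfl), mul_pos hfe hfl]
  have heq : (V - vstar) * c / fl = vstar / R + vstar * c / fe := by
    have hv : vstar * (fe * fl + c * R * (fe + fl)) = V * c * R * fe :=
      div_mul_cancel₀ _ hD.ne'
    rw [div_add_div _ _ hR.ne' hfe.ne', div_eq_div_iff hfl.ne' (mul_pos hR hfe).ne']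
    linear_combination -hv
  have hanti : StrictAnti (fun v : ℝ => (V - v) * c / fl) := by
    intro a b hab
    simp only
    rw [div_lt_div_iff₀ hfl hfl]
    nlinarith [mul_pos hc hfl]
  have hmono : StrictMono (fun v : ℝ => v / R + v * c / fe) := by
    intro a b hab
    simp only
    have h1 : a / R < b / R := by
      rw [div_lt_div_iff₀ hR hR]; nlinarith
    have h2 : a * c / fe ≤ b * c / fe := by
      rw [div_le_div_iff₀ hfe hfe]; nlinarith [mul_pos hc hfe]
    exact add_lt_add_of_lt_of_le h1 h2
  have hT : T vstar = (V - vstar) * c / fl := by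
    simp only [T, heq, max_self]
  have hmin : ∀ v ∈ Set.Icc 0 V, T vstar ≤ T v := by
    intro v hv
    rcases lt_trichotomy v vstar with h | rfl | h
    · have h1 := hanti h
      calc T vstar = (V - vstar) * c / fl := hT
        _ ≤ (V - v) * c / fl := le_of_lt h1
        _ ≤ T v := le_max_left _ _
    · exact le_rfl
    · have h1 := hmono h
      calc T vstar = vstar / R + vstar * c / fe := by rw [hT, heq]
        _ ≤ v / R + v * c / fe := le_of_lt h1
        _ ≤ T v := le_max_right _ _
  refine ⟨⟨hpos, hlt⟩, heq, hmin, ?_, hanti, hmono⟩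
  intro v hv hTv
  by_contra hne
  rcases lt_or_gt_of_ne hne with h | h
  · have h1 : (V - vstar) * c / fl < (V - v) * c / fl := hanti h
    have : T vstar < T v := lt_of_lt_of_le (hT ▸ h1) (le_max_left _ _)
    exact absurd hTv (by linarith)
  · have h1 : vstar / R + vstar * c / fe < v / R + v * c / fe := hmono h
    have : T vstar < T v := lt_of_lt_of_le (by rw [hT, heq]; exact h1) (le_max_right _ _)
    exact absurd hTv (by linarith)
end

section
/- Let h, g ∈ ℂ^N be linearly independent, so that D := ‖h‖²‖g‖² − |h^H g|² > 0, and let P_t > 0 and η satisfy P_t |g^H h|²/‖h‖² ≤ η ≤ P_t ‖g‖². Define |a| = √((P_t ‖g‖² − η)/D) and |b| = (√η − |h^H g| · |a|)/‖g‖², and choose complex scalars a, b with these moduli and with arg(a) − arg(b) = ∠(h^H g). Then |b| ≥ 0, and f = a h + b g satisfies ‖f‖² = P_t and |g^H f|² = η. -/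
open Complex in
private lemma polar3 (r s t x y z : ℝ) (hxyz : x + y + z = 0) :
    ((r : ℂ) * Complex.exp (x * I)) * ((s : ℂ) * Complex.exp (y * I)) *
      ((t : ℂ) * Complex.exp (z * I)) = ((r * s * t : ℝ) : ℂ) := by
  have h1 : ((r : ℂ) * Complex.exp (x * I)) * ((s : ℂ) * Complex.exp (y * I)) *
      ((t : ℂ) * Complex.exp (z * I))
      = ((r * s * t : ℝ) : ℂ) * (Complex.exp (x * I) * Complex.exp (y * I) *
        Complex.exp (z * I)) := by push_cast; ring
  rw [h1, ← Complex.exp_add, ← Complex.exp_add]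
  have h2 : (x : ℂ) * I + (y : ℂ) * I + (z : ℂ) * I = ((x + y + z : ℝ) : ℂ) * I := by
    push_cast; ring
  rw [h2, hxyz]
  simp

open Complex in
private lemma polar2 (r s x y w : ℝ) (hxy : x + y = w) :
    ((r : ℂ) * Complex.exp (x * I)) * ((s : ℂ) * Complex.exp (y * I))
      = ((r * s : ℝ) : ℂ) * Complex.exp ((w : ℝ) * I) := by
  have h1 : ((r : ℂ) * Complex.exp (x * I)) * ((s : ℂ) * Complex.exp (y * I))
      = ((r * s : ℝ) : ℂ) * (Complex.exp (x * I) * Complex.exp (y * I)) := by push_cast; ring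
  rw [h1, ← Complex.exp_add]
  have h2 : (x : ℂ) * I + (y : ℂ) * I = ((x + y : ℝ) : ℂ) * I := by push_cast; ring
  rw [h2, hxy]

open Complex in
private lemma conj_polar (a : ℂ) :
    (starRingEnd ℂ) a = (‖a‖ : ℂ) * Complex.exp ((-a.arg : ℝ) * I) := by
  conv_lhs => rw [← Complex.norm_mul_exp_arg_mul_I a]
  rw [map_mul, ← Complex.exp_conj]
  push_cast
  rw [Complex.conj_ofReal]
  congr 1
  rw [map_mul, Complex.conj_ofReal, Complex.conj_I]
  ring

theorem stmt_16 (N : ℕ) (h g : EuclideanSpace ℂ (Fin N))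
    (hind : LinearIndependent ℂ ![h, g]) (Pt η : ℝ) (hPt : 0 < Pt)
    (hη₁ : Pt * ‖(inner ℂ g h : ℂ)‖ ^ 2 / ‖h‖ ^ 2 ≤ η) (hη₂ : η ≤ Pt * ‖g‖ ^ 2) :
    let D : ℝ := ‖h‖ ^ 2 * ‖g‖ ^ 2 - ‖(inner ℂ h g : ℂ)‖ ^ 2
    0 < D ∧
    ∀ a b : ℂ,
      ‖a‖ = Real.sqrt ((Pt * ‖g‖ ^ 2 - η) / D) →
      ‖b‖ = (Real.sqrt η - ‖(inner ℂ h g : ℂ)‖ * ‖a‖) / ‖g‖ ^ 2 →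
      Complex.arg a - Complex.arg b = Complex.arg (inner ℂ h g : ℂ) →
      0 ≤ (Real.sqrt η - ‖(inner ℂ h g : ℂ)‖ * ‖a‖) / ‖g‖ ^ 2 ∧
      ‖(a • h + b • g : EuclideanSpace ℂ (Fin N))‖ ^ 2 = Pt ∧
      ‖(inner ℂ g (a • h + b • g : EuclideanSpace ℂ (Fin N)) : ℂ)‖ ^ 2 = η := by
  intro D
  obtain ⟨hg0, hdep⟩ := linearIndependent_fin2.mp hind
  rw [show (![h, g] 1) = g from rfl] at hg0
  have hdep' : ∀ a : ℂ, a • g ≠ h := by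
    intro a; have := hdep a; simpa using this
  have hh0 : h ≠ 0 := fun hh => hdep' 0 (by simp [hh])
  have hgn : (0:ℝ) < ‖g‖ := norm_pos_iff.mpr hg0
  have hhn : (0:ℝ) < ‖h‖ := norm_pos_iff.mpr hh0
  set c : ℂ := (inner ℂ h g : ℂ) with hc
  set t : ℝ := ‖c‖ with ht
  have ht0 : 0 ≤ t := norm_nonneg _
  have hcs : t < ‖h‖ * ‖g‖ := by
    rcases lt_or_eq_of_le (norm_inner_le_norm (𝕜 := ℂ) h g) with h' | h'
    · exact h'
    · exfalso
      obtain ⟨ρ, hρ0, hρg⟩ := (norm_inner_eq_norm_iff hh0 hg0).mp h'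
      exact hdep' ρ⁻¹ (by rw [hρg, smul_smul, inv_mul_cancel₀ hρ0, one_smul])
  have hD : 0 < D := by
    have : D = ‖h‖ ^ 2 * ‖g‖ ^ 2 - t ^ 2 := rfl
    rw [this]; nlinarith
  have hDval : D = ‖h‖ ^ 2 * ‖g‖ ^ 2 - t ^ 2 := rfl
  have hgh : ‖(inner ℂ g h : ℂ)‖ = t := by rw [ht, hc, norm_inner_symm]
  have hη0 : 0 ≤ η := le_trans (by positivity) (hgh ▸ hη₁)
  have hsq : Real.sqrt η ^ 2 = η := Real.sq_sqrt hη0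
  have hη₁' : Pt * t ^ 2 ≤ η * ‖h‖ ^ 2 := by
    rw [hgh] at hη₁
    have := (div_le_iff₀ (by positivity)).mp hη₁
    linarith
  refine ⟨hD, ?_⟩
  intro a b ha hb harg
  set r : ℝ := ‖a‖ with hr
  set s : ℝ := ‖b‖ with hs
  have hr0 : 0 ≤ r := norm_nonneg a
  have hs0 : 0 ≤ s := norm_nonneg b
  have hr2 : r ^ 2 * D = Pt * ‖g‖ ^ 2 - η := by
    rw [ha, Real.sq_sqrt (div_nonneg (by linarith) hD.le),
      div_mul_cancel₀ _ hD.ne']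
  have hr2' : r ^ 2 * (‖h‖ ^ 2 * ‖g‖ ^ 2 - t ^ 2) = Pt * ‖g‖ ^ 2 - η := by
    rw [← hDval]; exact hr2
  -- key inequality : t * r ≤ √η
  have hkey : t * r ≤ Real.sqrt η := by
    rw [← Real.sqrt_sq (by positivity : (0:ℝ) ≤ t * r)]
    apply Real.sqrt_le_sqrt
    have h1 : (t * r) ^ 2 * D ≤ η * D := by
      have h2 : t ^ 2 * (r ^ 2 * D) ≤ η * D := by
        rw [hr2, hDval]
        nlinarith [mul_le_mul_of_nonneg_right hη₁' (sq_nonneg ‖g‖)]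
      nlinarith
    exact le_of_mul_le_mul_right (by linarith [h1]) hD
  have hbn : s * ‖g‖ ^ 2 = Real.sqrt η - t * r := by
    rw [hb, div_mul_cancel₀ _ (by positivity : (‖g‖ ^ 2 : ℝ) ≠ 0)]
  refine ⟨div_nonneg (by linarith) (by positivity), ?_, ?_⟩
  · -- power constraint
    have habc : (starRingEnd ℂ) a * b * c = ((r * s * t : ℝ) : ℂ) := by
      rw [conj_polar a]
      conv_lhs => rw [← Complex.norm_mul_exp_arg_mul_I b, ← Complex.norm_mul_exp_arg_mul_I c]
      rw [polar3 _ _ _ _ _ _ (by linarith [harg] : -a.arg + b.arg + c.arg = 0)]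
    have hre : ‖(a • h + b • g : EuclideanSpace ℂ (Fin N))‖ ^ 2
        = r ^ 2 * ‖h‖ ^ 2 + 2 * (r * s * t) + s ^ 2 * ‖g‖ ^ 2 := by
      rw [norm_add_sq (𝕜 := ℂ), inner_smul_left, inner_smul_right, ← hc, ← mul_assoc, habc,
        norm_smul, norm_smul]
      simp only [← hr, ← hs, Complex.ofReal_re, RCLike.re_to_complex]
      ring
    have e1 : (r ^ 2 * ‖h‖ ^ 2 + 2 * (r * s * t) + s ^ 2 * ‖g‖ ^ 2) * ‖g‖ ^ 2
        = Pt * ‖g‖ ^ 2 := by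
      linear_combination (s * ‖g‖ ^ 2 + Real.sqrt η + t * r) * hbn + hr2' + hsq
    rw [hre]
    exact mul_right_cancel₀ (by positivity) e1
  · -- radar constraint
    have hgf : (inner ℂ g (a • h + b • g : EuclideanSpace ℂ (Fin N)) : ℂ)
        = ((r * t + s * ‖g‖ ^ 2 : ℝ) : ℂ) * Complex.exp ((b.arg : ℝ) * Complex.I) := by
      rw [inner_add_right, inner_smul_right, inner_smul_right,
        inner_self_eq_norm_sq_to_K]
      simp only [Complex.coe_algebraMap]
      have hgh' : (inner ℂ g h : ℂ) = (starRingEnd ℂ) c := by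
        rw [hc]; exact (inner_conj_symm g h).symm
      have htc : ‖c‖ = t := by rw [ht]
      rw [hgh', conj_polar c, htc]
      conv_lhs => rw [← Complex.norm_mul_exp_arg_mul_I a, ← Complex.norm_mul_exp_arg_mul_I b]
      rw [← hr, ← hs, polar2 r t a.arg (-c.arg) b.arg (by linarith [harg])]
      push_cast
      ring
    rw [hgf]
    rw [norm_mul]
    have he : ‖Complex.exp ((b.arg : ℝ) * Complex.I)‖ = 1 := by
      rw [Complex.norm_exp_ofReal_mul_I]
    rw [he, mul_one, Complex.norm_real, Real.norm_eq_abs]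
    have hsum : r * t + s * ‖g‖ ^ 2 = Real.sqrt η := by linarith [hbn]
    rw [hsum, abs_of_nonneg (Real.sqrt_nonneg η), hsq]
end

section
/- Let h, g ∈ ℂ^N be linearly independent, so that D := ‖h‖²‖g‖² − |h^H g|² > 0, and let P_t > 0 and η satisfy P_t |g^H h|²/‖h‖² ≤ η ≤ P_t ‖g‖². Let f = a h + b g with |a| = √((P_t ‖g‖² − η)/D), |b| = (√η − |h^H g| · |a|)/‖g‖², and arg(a) − arg(b) = ∠(h^H g). Then for every f' ∈ ℂ^N with ‖f'‖² ≤ P_t and |g^H f'|² ≥ η, one has |h^H f'|² ≤ |h^H f|²; that is, f is a global maximizer of |h^H f|² over the feasible set S = {f' : ‖f'‖² ≤ P_t, |g^H f'|² ≥ η}. -/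
set_option maxHeartbeats 1000000

open scoped ComplexConjugate

lemma aux_ofReal (x : ℝ) : (RCLike.ofReal x : ℂ) = Complex.ofReal x := rfl

lemma key_scalar (D G H γ Pt r s t : ℝ) (hD : 0 < D) (hDdef : D = H^2*G^2 - γ^2)
    (hγ : 0 ≤ γ) (hs : 0 ≤ s) (hr : 0 ≤ r) (htr : r ≤ t)
    (h1 : Pt * γ^2 ≤ H^2 * r^2)
    (h2 : G^2*s^2 + H^2*t^2 - 2*γ*s*t ≤ D*Pt) :
    G^2*s ≤ γ*r + Real.sqrt (D*(G^2*Pt - r^2)) := by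
  have ht : 0 ≤ t := hr.trans htr
  have hq : (G^2*s - γ*t)^2 + D*t^2 ≤ D*(G^2*Pt) := by nlinarith [h2]
  have htP : t^2 ≤ G^2*Pt := by nlinarith [sq_nonneg (G^2*s - γ*t)]
  have hrP : r^2 ≤ G^2*Pt := by nlinarith
  set X := Real.sqrt (D*(G^2*Pt - r^2)) with hXdef
  set B := Real.sqrt (D*(G^2*Pt - t^2)) with hBdef
  have hX0 : 0 ≤ X := Real.sqrt_nonneg _
  have hB0 : 0 ≤ B := Real.sqrt_nonneg _
  have hX2 : X^2 = D*(G^2*Pt - r^2) := Real.sq_sqrt (by nlinarith)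
  have hB2 : B^2 = D*(G^2*Pt - t^2) := Real.sq_sqrt (by nlinarith)
  have hPB : G^2*s ≤ γ*t + B := by
    nlinarith [sq_nonneg (G^2*s - γ*t - B), sq_nonneg (G^2*s - γ*t + B)]
  have h1' : γ^2*(G^2*Pt) ≤ H^2*G^2*r^2 := by nlinarith [mul_le_mul_of_nonneg_left h1 (sq_nonneg G)]
  have hrt2 : r^2 ≤ t^2 := by nlinarith
  have h1t : γ^2*(G^2*Pt) ≤ H^2*G^2*t^2 :=
    le_trans h1' (by nlinarith [mul_le_mul_of_nonneg_left hrt2 (mul_nonneg (sq_nonneg H) (sq_nonneg G))])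
  have hγX : γ*X ≤ D*r := by
    have fact : D*(γ^2*(G^2*Pt)) ≤ D*(H^2*G^2*r^2) := mul_le_mul_of_nonneg_left h1' hD.le
    have hDD : D^2*r^2 + D*γ^2*r^2 = D*(H^2*G^2*r^2) := by rw [hDdef]; ring
    have h' : (γ*X)^2 ≤ (D*r)^2 := by rw [mul_pow, hX2]; nlinarith [fact, hDD]
    calc γ*X = Real.sqrt ((γ*X)^2) := (Real.sqrt_sq (mul_nonneg hγ hX0)).symm
      _ ≤ Real.sqrt ((D*r)^2) := Real.sqrt_le_sqrt h'
      _ = D*r := Real.sqrt_sq (mul_nonneg hD.le hr)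
  have hγB : γ*B ≤ D*t := by
    have fact : D*(γ^2*(G^2*Pt)) ≤ D*(H^2*G^2*t^2) := mul_le_mul_of_nonneg_left h1t hD.le
    have hDD : D^2*t^2 + D*γ^2*t^2 = D*(H^2*G^2*t^2) := by rw [hDdef]; ring
    have h' : (γ*B)^2 ≤ (D*t)^2 := by rw [mul_pow, hB2]; nlinarith [fact, hDD]
    calc γ*B = Real.sqrt ((γ*B)^2) := (Real.sqrt_sq (mul_nonneg hγ hB0)).symm
      _ ≤ Real.sqrt ((D*t)^2) := Real.sqrt_le_sqrt h'
      _ = D*t := Real.sqrt_sq (mul_nonneg hD.le ht)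
  have hkey : γ*(t-r) ≤ X - B := by
    rcases eq_or_lt_of_le (by positivity : (0:ℝ) ≤ X + B) with hXB | hXB
    · have hX' : X = 0 := by nlinarith
      have hB' : B = 0 := by nlinarith
      have hr2 : G^2*Pt - r^2 = 0 := by
        have := hX2; rw [hX'] at this; norm_num at this
        have := this.resolve_left hD.ne'
        linarith
      have ht2 : G^2*Pt - t^2 = 0 := by
        have := hB2; rw [hB'] at this; norm_num at this
        have := this.resolve_left hD.ne'
        linarith
      have : t = r := by
        rw [← Real.sqrt_sq ht, ← Real.sqrt_sq hr]
        congr 1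
        linarith
      simp [this, hX', hB']
    · have h3 : (γ*(t-r))*(X+B) ≤ (X-B)*(X+B) := by
        nlinarith [mul_le_mul_of_nonneg_left hγX (sub_nonneg.2 htr),
          mul_le_mul_of_nonneg_left hγB (sub_nonneg.2 htr)]
      exact le_of_mul_le_mul_right (by linarith [h3]) hXB
  linarith

variable {E : Type*} [NormedAddCommGroup E] [InnerProductSpace ℂ E]

lemma gram_ineq (h g f' : E)
    (hD : 0 < ‖h‖^2*‖g‖^2 - ‖(inner ℂ h g : ℂ)‖^2) :
    ‖g‖^2*‖(inner ℂ h f' : ℂ)‖^2 + ‖h‖^2*‖(inner ℂ g f' : ℂ)‖^2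
      - 2*‖(inner ℂ h g : ℂ)‖*‖(inner ℂ h f' : ℂ)‖*‖(inner ℂ g f' : ℂ)‖
      ≤ (‖h‖^2*‖g‖^2 - ‖(inner ℂ h g : ℂ)‖^2) * ‖f'‖^2 := by
  set c : ℂ := inner ℂ h g with hc
  set u : ℂ := inner ℂ h f' with hu
  set v : ℂ := inner ℂ g f' with hv
  set D : ℝ := ‖h‖^2*‖g‖^2 - ‖c‖^2 with hDdef
  set α : ℂ := ((‖g‖:ℂ))^2 * u - c * v with hα
  set β : ℂ := ((‖h‖:ℂ))^2 * v - (conj c) * u with hβ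
  set z : E := α • h + β • g with hz
  have hgh : (inner ℂ g h : ℂ) = conj c := by rw [hc, inner_conj_symm]
  have hcc : conj c * c = ((‖c‖:ℂ))^2 := by rw [RCLike.conj_mul]; simp only [aux_ofReal]
  have huu : conj u * u = ((‖u‖:ℂ))^2 := by rw [RCLike.conj_mul]; simp only [aux_ofReal]
  have hvv : conj v * v = ((‖v‖:ℂ))^2 := by rw [RCLike.conj_mul]; simp only [aux_ofReal]
  have hIh : (inner ℂ h z : ℂ) = (D:ℂ) * u := by
    rw [hz, inner_add_right, inner_smul_right, inner_smul_right,
      inner_self_eq_norm_sq_to_K, ← hc, hα, hβ, hDdef]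
    simp only [aux_ofReal]
    push_cast
    linear_combination (-u) * hcc
  have hIg : (inner ℂ g z : ℂ) = (D:ℂ) * v := by
    rw [hz, inner_add_right, inner_smul_right, inner_smul_right,
      inner_self_eq_norm_sq_to_K, hgh, hα, hβ, hDdef]
    simp only [aux_ofReal]
    push_cast
    linear_combination (-v) * hcc
  have hIzf : (inner ℂ z f' : ℂ) = conj α * u + conj β * v := by
    rw [hz, inner_add_left, inner_smul_left, inner_smul_left, ← hu, ← hv]
  have hIzz : (inner ℂ z z : ℂ) = (D:ℂ) * (conj α * u + conj β * v) := by
    rw [hz, inner_add_left, inner_smul_left, inner_smul_left, ← hz, hIh, hIg]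
    ring
  have hnz : ‖z‖^2 = D * RCLike.re (inner ℂ z f' : ℂ) := by
    rw [← inner_self_eq_norm_sq (𝕜 := ℂ), hIzz, hIzf]
    simp [RCLike.re_to_complex, Complex.mul_re]
  have hre : RCLike.re (inner ℂ z f' : ℂ) ≤ D * ‖f'‖^2 := by
    have h0 : (0:ℝ) ≤ ‖(D:ℂ) • f' - z‖^2 := sq_nonneg _
    rw [@norm_sub_sq ℂ] at h0
    have h1 : ‖(D:ℂ) • f'‖^2 = D^2 * ‖f'‖^2 := by
      rw [norm_smul]
      simp [mul_pow, Complex.sq_norm]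
    have h2 : RCLike.re (inner ℂ ((D:ℂ) • f') z : ℂ) = D * RCLike.re (inner ℂ z f' : ℂ) := by
      rw [inner_smul_left, Complex.conj_ofReal,
        show RCLike.re ((D:ℂ) * (inner ℂ f' z : ℂ)) = D * RCLike.re (inner ℂ f' z : ℂ) by
          simp [RCLike.re_to_complex, Complex.mul_re],
        inner_re_symm]
    rw [h1, h2, hnz] at h0
    have hDR : D * RCLike.re (inner ℂ z f' : ℂ) ≤ D * (D * ‖f'‖^2) := by nlinarith
    exact (mul_le_mul_iff_right₀ hD).mp hDR
  have hexp : RCLike.re (inner ℂ z f' : ℂ)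
      = ‖g‖^2*‖u‖^2 + ‖h‖^2*‖v‖^2 - 2*RCLike.re (c * conj u * v) := by
    rw [hIzf, hα, hβ]
    have e : conj ((‖g‖:ℂ)^2*u - c*v) * u + conj ((‖h‖:ℂ)^2*v - conj c*u) * v
        = ((‖g‖^2*‖u‖^2 + ‖h‖^2*‖v‖^2 : ℝ):ℂ) - (conj (c * conj u * v) + c * conj u * v) := by
      simp only [map_sub, map_mul, map_pow, Complex.conj_ofReal, Complex.conj_conj]
      push_cast
      linear_combination ((‖g‖:ℂ)^2) * huu + ((‖h‖:ℂ)^2) * hvv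
    rw [e]
    simp only [RCLike.re_to_complex, Complex.sub_re, Complex.add_re, Complex.conj_re,
      Complex.ofReal_re]
    ring
  have hrebound : RCLike.re (c * conj u * v) ≤ ‖c‖*‖u‖*‖v‖ := by
    calc RCLike.re (c * conj u * v) ≤ ‖c * conj u * v‖ := RCLike.re_le_norm _
      _ = ‖c‖*‖u‖*‖v‖ := by rw [norm_mul, norm_mul, RCLike.norm_conj]
  linarith [hre, hexp, hrebound]

theorem main_general (h g : E)
    (hind : LinearIndependent ℂ ![h, g]) (Pt η : ℝ) (hPt : 0 < Pt)
    (hη₁ : Pt * ‖(inner ℂ g h : ℂ)‖ ^ 2 / ‖h‖ ^ 2 ≤ η) (hη₂ : η ≤ Pt * ‖g‖ ^ 2)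
    (a b : ℂ)
    (ha : ‖a‖ =
      Real.sqrt ((Pt * ‖g‖ ^ 2 - η) / (‖h‖ ^ 2 * ‖g‖ ^ 2 - ‖(inner ℂ h g : ℂ)‖ ^ 2)))
    (hb : ‖b‖ = (Real.sqrt η - ‖(inner ℂ h g : ℂ)‖ * ‖a‖) / ‖g‖ ^ 2)
    (harg : Complex.arg a - Complex.arg b = Complex.arg (inner ℂ h g : ℂ)) :
    ∀ f' : E, ‖f'‖ ^ 2 ≤ Pt → η ≤ ‖(inner ℂ g f' : ℂ)‖ ^ 2 →
      ‖(inner ℂ h f' : ℂ)‖ ^ 2 ≤ ‖(inner ℂ h (a • h + b • g : E) : ℂ)‖ ^ 2 := by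
  obtain ⟨hg0, hnr⟩ := linearIndependent_fin2.mp (by simpa using hind)
  simp only [Matrix.cons_val_one, Matrix.head_cons, Matrix.cons_val_zero] at hg0 hnr
  have hh0 : h ≠ 0 := fun h0 => hnr 0 (by simp [h0])
  have hH : 0 < ‖h‖ := norm_pos_iff.mpr hh0
  have hG : 0 < ‖g‖ := norm_pos_iff.mpr hg0
  set c : ℂ := inner ℂ h g with hc
  set γ : ℝ := ‖c‖ with hγdef
  have hγ0 : 0 ≤ γ := norm_nonneg _
  have hγHG : γ < ‖h‖ * ‖g‖ := by
    rcases lt_or_eq_of_le (norm_inner_le_norm (𝕜 := ℂ) h g) with hlt | heq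
    · exact hlt
    · exfalso
      have heq' : ‖(inner ℂ g h : ℂ)‖ = ‖g‖ * ‖h‖ := by
        rw [norm_inner_symm]; rw [← hc] at *; linarith [heq]
      obtain ⟨r, hr0, hrr⟩ := (norm_inner_eq_norm_iff hg0 hh0).mp heq'
      exact hnr r hrr.symm
  set D : ℝ := ‖h‖^2*‖g‖^2 - γ^2 with hDdef
  have hD : 0 < D := by nlinarith
  have hη0 : 0 ≤ η := le_trans (by positivity) hη₁
  intro f' hf1 hf2
  set s : ℝ := ‖(inner ℂ h f' : ℂ)‖ with hs
  set t : ℝ := ‖(inner ℂ g f' : ℂ)‖ with ht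
  set r : ℝ := Real.sqrt η with hr
  have hr2 : r^2 = η := Real.sq_sqrt hη0
  have htr : r ≤ t := by
    rw [hr]
    calc Real.sqrt η ≤ Real.sqrt (t^2) := Real.sqrt_le_sqrt hf2
      _ = t := Real.sqrt_sq (norm_nonneg _)
  have h1 : Pt * γ^2 ≤ ‖h‖^2 * r^2 := by
    have hgh : ‖(inner ℂ g h : ℂ)‖ = γ := by rw [hγdef, hc, norm_inner_symm]
    rw [hgh] at hη₁
    rw [hr2]
    calc Pt * γ^2 = (Pt * γ^2 / ‖h‖^2) * ‖h‖^2 := by field_simp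
      _ ≤ η * ‖h‖^2 := by
          apply mul_le_mul_of_nonneg_right hη₁ (by positivity)
      _ = ‖h‖^2 * η := by ring
  have hgram := gram_ineq h g f' (by rw [← hc, ← hγdef]; linarith)
  rw [← hc, ← hγdef, ← hs, ← ht] at hgram
  have h2 : ‖g‖^2*s^2 + ‖h‖^2*t^2 - 2*γ*s*t ≤ D*Pt := by
    have : (‖h‖^2*‖g‖^2 - γ^2) * ‖f'‖^2 ≤ D*Pt := by
      rw [← hDdef]
      exact mul_le_mul_of_nonneg_left hf1 hD.le
    linarith [hgram]
  have hks := key_scalar D ‖g‖ ‖h‖ γ Pt r s t hD hDdef hγ0 (norm_nonneg _)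
    (Real.sqrt_nonneg _) htr h1 h2
  -- value of the candidate point
  have hval : (inner ℂ h (a • h + b • g : E) : ℂ) = a*((‖h‖^2:ℝ):ℂ) + b*c := by
    rw [inner_add_right, inner_smul_right, inner_smul_right, inner_self_eq_norm_sq_to_K, ← hc]
    simp only [aux_ofReal]
    push_cast
    ring
  have halign : a*((‖h‖^2:ℝ):ℂ) + b*c
      = Complex.exp (Complex.arg a * Complex.I) *
        ((‖a‖ * ‖h‖^2 + ‖b‖ * γ : ℝ):ℂ) := by
    have hbc : ((‖b‖ : ℂ) * Complex.exp (Complex.arg b * Complex.I)) *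
        ((‖c‖ : ℂ) * Complex.exp (Complex.arg c * Complex.I))
        = (‖b‖ : ℂ) * (‖c‖ : ℂ) *
          Complex.exp (Complex.arg a * Complex.I) := by
      rw [mul_mul_mul_comm, ← Complex.exp_add,
        show ((Complex.arg b : ℂ)*Complex.I + (Complex.arg c : ℂ)*Complex.I)
            = (((Complex.arg b + Complex.arg c : ℝ)) : ℂ)*Complex.I by push_cast; ring,
        show (Complex.arg b + Complex.arg c : ℝ) = Complex.arg a by linarith [harg]]
    conv_lhs => rw [← Complex.norm_mul_exp_arg_mul_I a, ← Complex.norm_mul_exp_arg_mul_I b,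
      ← Complex.norm_mul_exp_arg_mul_I c]
    push_cast
    have hγc : (γ:ℂ) = (‖c‖ : ℂ) := by
      rw [hγdef]
    rw [hγc]
    linear_combination hbc
  have hRn : ‖(inner ℂ h (a • h + b • g : E) : ℂ)‖ = ‖a‖ * ‖h‖^2 + ‖b‖ * γ := by
    rw [hval, halign, norm_mul, Complex.norm_exp_ofReal_mul_I, one_mul, Complex.norm_real,
      Real.norm_eq_abs, abs_of_nonneg (by positivity)]
  have hb' : ‖g‖^2 * ‖b‖ = r - γ * ‖a‖ := by
    rw [hb]
    field_simp
  have haD : ‖a‖ * D = Real.sqrt (D*(‖g‖^2*Pt - r^2)) := by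
    rw [ha, hr2]
    rw [show D*(‖g‖^2*Pt - η) = ((Pt*‖g‖^2 - η)/D)*D^2 by field_simp]
    rw [Real.sqrt_mul (div_nonneg (by linarith) hD.le : (0:ℝ) ≤ (Pt*‖g‖^2 - η)/D), Real.sqrt_sq hD.le]
  have hG2 : ‖g‖^2*(‖a‖*‖h‖^2 + ‖b‖*γ)
      = γ*r + Real.sqrt (D*(‖g‖^2*Pt - r^2)) := by
    have hDexp : D = ‖h‖^2*‖g‖^2 - γ^2 := hDdef
    linear_combination γ * hb' + haD + ‖a‖ * hDexp
  have hsle : s ≤ ‖a‖*‖h‖^2 + ‖b‖*γ := by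
    have h' : ‖g‖^2 * s ≤ ‖g‖^2 * (‖a‖*‖h‖^2 + ‖b‖*γ) := by
      rw [hG2]; exact hks
    exact le_of_mul_le_mul_left h' (by positivity)
  rw [hRn]
  exact pow_le_pow_left₀ (norm_nonneg _) hsle 2

theorem stmt_17 (N : ℕ) (h g : EuclideanSpace ℂ (Fin N))
    (hind : LinearIndependent ℂ ![h, g]) (Pt η : ℝ) (hPt : 0 < Pt)
    (hη₁ : Pt * ‖(inner ℂ g h : ℂ)‖ ^ 2 / ‖h‖ ^ 2 ≤ η) (hη₂ : η ≤ Pt * ‖g‖ ^ 2)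
    (a b : ℂ)
    (ha : ‖a‖ =
      Real.sqrt ((Pt * ‖g‖ ^ 2 - η) / (‖h‖ ^ 2 * ‖g‖ ^ 2 - ‖(inner ℂ h g : ℂ)‖ ^ 2)))
    (hb : ‖b‖ = (Real.sqrt η - ‖(inner ℂ h g : ℂ)‖ * ‖a‖) / ‖g‖ ^ 2)
    (harg : Complex.arg a - Complex.arg b = Complex.arg (inner ℂ h g : ℂ)) :
    ∀ f' : EuclideanSpace ℂ (Fin N), ‖f'‖ ^ 2 ≤ Pt → η ≤ ‖(inner ℂ g f' : ℂ)‖ ^ 2 →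
      ‖(inner ℂ h f' : ℂ)‖ ^ 2 ≤
        ‖(inner ℂ h (a • h + b • g : EuclideanSpace ℂ (Fin N)) : ℂ)‖ ^ 2 := by
  exact main_general h g hind Pt η hPt hη₁ hη₂ a b ha hb harg
end
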